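/- Let $s \in [0,T]$, let $\rho$ be a random variable with values in $[0,T]\cup\{\infty\}$ whose survival process $G(\rho)$ (satisfying $P(\rho>t\mid\mathscr{F}_t)=G_t(\rho)$ a.s. for each $t$) is jointly measurable, and let $X, \tilde{X}$ be $[0,\infty]$-valued measurable processes such that $X_t$ is $\mathscr{F}_t$-measurable and $X_t = \tilde{X}_t$ a.s. on $\{\rho > t\}$ for all $t \in [s,T]$. Then $E[\int_s^{T\wedge\rho} \tilde{X}_t\,dt \mid \mathscr{F}_s] = E[\int_s^T X_t G_t(\rho)\,dt \mid \mathscr{F}_s]$ almost surely. -/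

import Mathlib

open MeasureTheory Set
open scoped ENNReal

/-- `g` is a version of the conditional expectation of the `[0,∞]`-valued random
variable `f` given the sub-σ-field `m'`. -/
def IsLCondExp {Ω : Type*} {mΩ : MeasurableSpace Ω} (μ : Measure Ω)
    (m' : MeasurableSpace Ω) (f g : Ω → ℝ≥0∞) : Prop :=
  Measurable[m'] g ∧ ∀ A : Set Ω, MeasurableSet[m'] A →
    ∫⁻ ω in A, f ω ∂μ = ∫⁻ ω in A, g ω ∂μ

/-!
Both sides are conditional expectations given `𝓕ₛ`, so it suffices to compare
their integrals over a set `B ∈ 𝓕ₛ`. By Tonelli these are `t`-integrals over `[s, T]` of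
`∫_B 1{ρ > t} X̃ₜ dμ` and `∫_B Xₜ Gₜ dμ`. For fixed `t`, replace `X̃ₜ` by `Xₜ` on `{ρ > t}`;
since `1_B Xₜ` is `𝓕ₜ`-measurable (`B ∈ 𝓕ₛ ⊆ 𝓕ₜ`), it can be pulled out of the conditional
expectation `Gₜ = P(ρ > t | 𝓕ₜ)`.
-/

namespace IsLCondExp

variable {Ω : Type*} {m mΩ : MeasurableSpace Ω} {μ : Measure Ω} {f g : Ω → ℝ≥0∞}

theorem ae_eq (hm : m ≤ mΩ) [SigmaFinite (μ.trim hm)] {f' g' : Ω → ℝ≥0∞}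
    (hg : IsLCondExp μ m f g) (hg' : IsLCondExp μ m f' g')
    (hff' : ∀ A, MeasurableSet[m] A → ∫⁻ ω in A, f ω ∂μ = ∫⁻ ω in A, f' ω ∂μ) :
    g =ᵐ[μ] g' :=
  ae_eq_of_ae_eq_trim <| ae_eq_of_forall_setLIntegral_eq_of_sigmaFinite hg.1 hg'.1
    fun A hA _ => by
      rw [setLIntegral_trim hm hg.1 hA, setLIntegral_trim hm hg'.1 hA, ← hg.2 A hA,
        ← hg'.2 A hA, hff' A hA]

theorem lintegral_mul_left (hm : m ≤ mΩ) (hfg : IsLCondExp μ m f g) (hf : Measurable f)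
    {h : Ω → ℝ≥0∞} (hh : Measurable[m] h) :
    ∫⁻ ω, h ω * f ω ∂μ = ∫⁻ ω, h ω * g ω ∂μ := by
  have htrim : (μ.withDensity f).trim hm = (μ.withDensity g).trim hm := by
    refine @Measure.ext _ m _ _ fun A hA => ?_
    rw [trim_measurableSet_eq hm hA, trim_measurableSet_eq hm hA,
      withDensity_apply _ (hm A hA), withDensity_apply _ (hm A hA), hfg.2 A hA]
  have hh' : Measurable h := hh.mono hm le_rfl
  have hg : Measurable g := hfg.1.mono hm le_rfl
  simp_rw [mul_comm (h _)]
  calc ∫⁻ ω, f ω * h ω ∂μ = ∫⁻ ω, h ω ∂(μ.withDensity f).trim hm := by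
        rw [lintegral_trim hm hh, lintegral_withDensity_eq_lintegral_mul _ hf hh']; rfl
    _ = ∫⁻ ω, g ω * h ω ∂μ := by
        rw [htrim, lintegral_trim hm hh, lintegral_withDensity_eq_lintegral_mul _ hg hh']; rfl

theorem setLIntegral_indicator_eq (hm : m ≤ mΩ) {S : Set Ω} (hS : MeasurableSet S)
    (hG : IsLCondExp μ m (S.indicator 1) g) {h : Ω → ℝ≥0∞} (hh : Measurable[m] h)
    {B : Set Ω} (hB : MeasurableSet[m] B) :
    ∫⁻ ω in B, S.indicator h ω ∂μ = ∫⁻ ω in B, h ω * g ω ∂μ := by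
  have hB' : MeasurableSet B := hm B hB
  calc ∫⁻ ω in B, S.indicator h ω ∂μ = ∫⁻ ω, B.indicator h ω * S.indicator 1 ω ∂μ := by
        rw [← lintegral_indicator hB']
        congr 1 with ω
        by_cases hωB : ω ∈ B <;> by_cases hωS : ω ∈ S <;> simp [hωB, hωS]
    _ = ∫⁻ ω, B.indicator h ω * g ω ∂μ :=
        hG.lintegral_mul_left hm (measurable_one.indicator hS) (hh.indicator hB)
    _ = ∫⁻ ω in B, h ω * g ω ∂μ := by
        simp_rw [← indicator_mul_left]
        exact lintegral_indicator hB' _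

end IsLCondExp

theorem stmt2_general {Ω : Type*} [mΩ : MeasurableSpace Ω] (μ : Measure Ω)
    [IsProbabilityMeasure μ]
    (T : ℝ)
    (F : ℝ → MeasurableSpace Ω) (hFmono : Monotone F) (hFle : ∀ t, F t ≤ mΩ)
    (s : ℝ) (hs : s ∈ Icc 0 T)
    (ρ : Ω → ℝ≥0∞) (hρ : Measurable[mΩ] ρ)
    (G : ℝ → Ω → ℝ≥0∞)
    (hGmeas : Measurable[(inferInstance : MeasurableSpace (ℝ × Ω))]
      (fun p : ℝ × Ω => G p.1 p.2))
    (hGver : ∀ t ∈ Icc (0:ℝ) T,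
      IsLCondExp μ (F t) (({ω' | ENNReal.ofReal t < ρ ω'}).indicator 1) (G t))
    (X X' : ℝ → Ω → ℝ≥0∞)
    (hXmeas : Measurable[(inferInstance : MeasurableSpace (ℝ × Ω))]
      (fun p : ℝ × Ω => X p.1 p.2))
    (hX'meas : Measurable[(inferInstance : MeasurableSpace (ℝ × Ω))]
      (fun p : ℝ × Ω => X' p.1 p.2))
    (hXad : ∀ t ∈ Icc s T, Measurable[F t] (X t))
    (hagree : ∀ t ∈ Icc s T, ∀ᵐ ω ∂μ, ENNReal.ofReal t < ρ ω → X t ω = X' t ω) :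
    ∀ Y Z : Ω → ℝ≥0∞,
      IsLCondExp μ (F s)
        (fun ω => ∫⁻ t in Icc s T,
          (if ENNReal.ofReal t < ρ ω then X' t ω else 0) ∂volume) Y →
      IsLCondExp μ (F s)
        (fun ω => ∫⁻ t in Icc s T, X t ω * G t ω ∂volume) Z →
      Y =ᵐ[μ] Z := by
  intro Y Z hY hZ
  refine hY.ae_eq (hFle s) hZ fun B hB => ?_
  have hsurvival : ∀ t, MeasurableSet {ω | ENNReal.ofReal t < ρ ω} :=
    fun t => measurableSet_lt measurable_const hρ
  rw [lintegral_lintegral_swap, lintegral_lintegral_swap (f := fun ω t => X t ω * G t ω)]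
  · refine setLIntegral_congr_fun measurableSet_Icc fun t ht => ?_
    calc ∫⁻ ω in B, (if ENNReal.ofReal t < ρ ω then X' t ω else 0) ∂μ
        = ∫⁻ ω in B, {ω | ENNReal.ofReal t < ρ ω}.indicator (X t) ω ∂μ :=
          lintegral_congr_ae <| ae_restrict_of_ae <| (hagree t ht).mono fun ω hω => by
            by_cases hρt : ENNReal.ofReal t < ρ ω <;> simp [hρt, hω]
      _ = ∫⁻ ω in B, X t ω * G t ω ∂μ :=
          (hGver t ⟨hs.1.trans ht.1, ht.2⟩).setLIntegral_indicator_eq (hFle t) (hsurvival t)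
            (hXad t ht) (hFmono ht.1 B hB)
  · exact ((hXmeas.comp measurable_swap).mul (hGmeas.comp measurable_swap)).aemeasurable
  · refine (Measurable.ite ?_ (hX'meas.comp measurable_swap) measurable_const).aemeasurable
    exact measurableSet_lt measurable_snd.ennreal_ofReal (hρ.comp measurable_fst)

/-- stopped integral: if `Xₜ` is `𝓕ₜ`-measurable and `Xₜ = X̃ₜ` a.s.
on `{ρ > t}` for all `t ∈ [s,T]`, and `G` is a jointly measurable survival process of
`ρ`, then `E[∫_s^{T∧ρ} X̃ₜ dt | 𝓕ₛ] = E[∫_s^T Xₜ Gₜ(ρ) dt | 𝓕ₛ]` a.s. -/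
theorem stmt2 {Ω : Type*} [mΩ : MeasurableSpace Ω] (μ : Measure Ω)
    [IsProbabilityMeasure μ]
    (T : ℝ) (hT : 0 ≤ T)
    (F : ℝ → MeasurableSpace Ω) (hFmono : Monotone F) (hFle : ∀ t, F t ≤ mΩ)
    (s : ℝ) (hs : s ∈ Icc 0 T)
    (ρ : Ω → ℝ≥0∞) (hρ : Measurable[mΩ] ρ)
    (G : ℝ → Ω → ℝ≥0∞)
    (hGmeas : Measurable[(inferInstance : MeasurableSpace (ℝ × Ω))]
      (fun p : ℝ × Ω => G p.1 p.2))
    (hGver : ∀ t ∈ Icc (0:ℝ) T,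
      IsLCondExp μ (F t) (({ω' | ENNReal.ofReal t < ρ ω'}).indicator 1) (G t))
    (X X' : ℝ → Ω → ℝ≥0∞)
    (hXmeas : Measurable[(inferInstance : MeasurableSpace (ℝ × Ω))]
      (fun p : ℝ × Ω => X p.1 p.2))
    (hX'meas : Measurable[(inferInstance : MeasurableSpace (ℝ × Ω))]
      (fun p : ℝ × Ω => X' p.1 p.2))
    (hXad : ∀ t ∈ Icc s T, Measurable[F t] (X t))
    (hagree : ∀ t ∈ Icc s T, ∀ᵐ ω ∂μ, ENNReal.ofReal t < ρ ω → X t ω = X' t ω) :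
    ∀ Y Z : Ω → ℝ≥0∞,
      IsLCondExp μ (F s)
        (fun ω => ∫⁻ t in Icc s T,
          (if ENNReal.ofReal t < ρ ω then X' t ω else 0) ∂volume) Y →
      IsLCondExp μ (F s)
        (fun ω => ∫⁻ t in Icc s T, X t ω * G t ω ∂volume) Z →
      Y =ᵐ[μ] Z :=
  stmt2_general (mΩ := mΩ) μ T F hFmono hFle s hs ρ hρ G hGmeas hGver X X' hXmeas hX'meas hXad
    hagree
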